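/- arXiv:1802.09572 — 4 statements merged into one kernel-verified Lean document; each statement's English description precedes it below -/
import Mathlib

section
/- Let φ:(0,∞)→ℝ be continuously differentiable with φ' nowhere zero, strictly monotonic, with inf φ = a ∈ ℝ∪{-∞} and sup φ = ∞. Let ρ_K ∈ C(S^{n-1}) be strictly positive and g ∈ C(S^{n-1}). For ε near 0 define ρ_ε(u) = φ^{-1}(φ(ρ_K(u)) + ε g(u)). Then (ρ_ε(u) − ρ_K(u))/ε converges to g(u)/φ'(ρ_K(u)) uniformly on S^{n-1} as ε→0. -/
/-! Since the sphere is compact, it suffices to prove locally uniform convergence, i.e. the joint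
limit as `(ε, u) → (0, u₀)`. Strict monotonicity of `φ` turns `φ (ρe ε u) → φ (ρK u₀)` into
`ρe ε u → ρK u₀`, and a `C¹` function is strictly differentiable, so
`φ' (ρK u₀) (ρe ε u - ρK u) = ε g u + o(ρe ε u - ρK u)`; this forces `ρe ε u - ρK u = O(ε)`, and
dividing by `ε` gives the limit `g u₀ / φ' (ρK u₀)`. -/

open MeasureTheory Metric Set Filter
open scoped RealInnerProductSpace NNReal ENNReal Topology

noncomputable section

abbrev Euc (n : ℕ) := EuclideanSpace ℝ (Fin n)

def usphere (n : ℕ) : Set (Euc n) := Metric.sphere 0 1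

def smeas (n : ℕ) : Measure (Euc n) := (μH[(n : ℝ) - 1]).restrict (usphere n)


open Asymptotics

section

variable {α β ι : Type*} [LinearOrder α] [TopologicalSpace α] [OrderTopology α] [DenselyOrdered α]
  [LinearOrder β] [TopologicalSpace β] [OrderTopology β] {f : α → β} {s : Set α} {x : α}
  {l : Filter ι} {t : ι → α}

theorem StrictMonoOn.tendsto_of_tendsto_comp (hf : StrictMonoOn f s) (hs : s ∈ 𝓝 x)
    (hts : ∀ᶠ i in l, t i ∈ s) (h : Tendsto (fun i => f (t i)) l (𝓝 (f x))) :
    Tendsto t l (𝓝 x) := by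
  have hxs : x ∈ s := mem_of_mem_nhds hs
  refine tendsto_order.2 ⟨fun a ha => ?_, fun a ha => ?_⟩
  · obtain ⟨b, hbs, hab, hbx⟩ : ∃ b ∈ s, a < b ∧ b < x := by
      obtain ⟨c, hcx, hc⟩ := exists_Ioc_subset_of_mem_nhds hs ⟨a, ha⟩
      obtain ⟨b, hb, hbx⟩ := exists_between (max_lt hcx ha)
      exact ⟨b, hc ⟨(le_max_left _ _).trans_lt hb, hbx.le⟩, (le_max_right _ _).trans_lt hb, hbx⟩
    filter_upwards [(tendsto_order.1 h).1 _ (hf hbs hxs hbx), hts] with i hi hti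
    exact hab.trans ((hf.lt_iff_lt hbs hti).1 hi)
  · obtain ⟨b, hbs, hxb, hba⟩ : ∃ b ∈ s, x < b ∧ b < a := by
      obtain ⟨c, hxc, hc⟩ := exists_Ico_subset_of_mem_nhds hs ⟨a, ha⟩
      obtain ⟨b, hxb, hb⟩ := exists_between (lt_min hxc ha)
      exact ⟨b, hc ⟨hxb.le, hb.trans_le (min_le_left _ _)⟩, hxb, hb.trans_le (min_le_right _ _)⟩
    filter_upwards [(tendsto_order.1 h).2 _ (hf hxs hbs hxb), hts] with i hi hti
    exact ((hf.lt_iff_lt hti hbs).1 hi).trans hba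

theorem StrictAntiOn.tendsto_of_tendsto_comp (hf : StrictAntiOn f s) (hs : s ∈ 𝓝 x)
    (hts : ∀ᶠ i in l, t i ∈ s) (h : Tendsto (fun i => f (t i)) l (𝓝 (f x))) :
    Tendsto t l (𝓝 x) :=
  hf.dual_right.tendsto_of_tendsto_comp hs hts h

end

theorem HasStrictDerivAt.tendsto_sub_div_of_eq_add_mul {ι : Type*} {l : Filter ι}
    {φ : ℝ → ℝ} {φ' x c₀ : ℝ} {s t ε c : ι → ℝ} (hφ : HasStrictDerivAt φ φ' x) (hφ' : φ' ≠ 0)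
    (hs : Tendsto s l (𝓝 x)) (ht : Tendsto t l (𝓝 x)) (hc : Tendsto c l (𝓝 c₀))
    (hε : ∀ᶠ i in l, ε i ≠ 0) (heq : ∀ᶠ i in l, φ (t i) = φ (s i) + ε i * c i) :
    Tendsto (fun i => (t i - s i) / ε i) l (𝓝 (c₀ / φ')) := by
  set r : ι → ℝ := fun i => φ (t i) - φ (s i) - φ' * (t i - s i)
  have hr : r =o[l] fun i => t i - s i := by
    have := (hasDerivAtFilter_iff_isLittleO.1 hφ).comp_tendsto (ht.prodMk_nhds hs)
    simpa only [Function.comp_def, smul_eq_mul, mul_comm _ φ'] using this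
  have hd : (fun i => t i - s i) =O[l] ε := by
    have hsum : (fun i => r i + φ' * (t i - s i)) =ᶠ[l] fun i => ε i * c i := by
      filter_upwards [heq] with i hi
      simp only [r, hi]
      ring
    have hεc : (fun i => ε i * c i) =O[l] ε := by
      simpa using (isBigO_refl ε l).mul (hc.isBigO_one ℝ)
    calc (fun i => t i - s i) =O[l] fun i => φ' * (t i - s i) := isBigO_self_const_mul hφ' ..
      _ =O[l] fun i => r i + φ' * (t i - s i) :=
          (hr.trans_isBigO (isBigO_self_const_mul hφ' ..)).right_isBigO_add
      _ =O[l] ε := hεc.congr' hsum.symm EventuallyEq.rfl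
  have hrε : Tendsto (fun i => r i / ε i) l (𝓝 0) := (hr.trans_isBigO hd).tendsto_div_nhds_zero
  have hquot : ∀ᶠ i in l, (t i - s i) / ε i = c i / φ' - r i / ε i / φ' := by
    filter_upwards [hε, heq] with i hεi hi
    simp only [r, hi]
    field_simp
    ring
  refine (tendsto_congr' hquot).2 ?_
  simpa using (hc.div_const φ').sub (hrε.div_const φ')

theorem IsCompact.tendstoUniformlyOn_of_tendsto_prod {α β ι : Type*} [TopologicalSpace α]
    [UniformSpace β] {F : ι → α → β} {f : α → β} {p : Filter ι} {s : Set α} (hs : IsCompact s)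
    (hf : ContinuousOn f s)
    (h : ∀ x ∈ s, Tendsto (fun q : ι × α => F q.1 q.2) (p ×ˢ 𝓝[s] x) (𝓝 (f x))) :
    TendstoUniformlyOn F f p s :=
  (tendstoLocallyUniformlyOn_iff_tendstoUniformlyOn_of_compact hs).1 <|
    tendstoLocallyUniformlyOn_iff_forall_tendsto.2 fun x hx =>
      (((hf x hx).tendsto.comp tendsto_snd).prodMk_nhds (h x hx)).mono_right
        (nhds_le_uniformity _)

theorem stmt1_general (n : ℕ) (φ φ' : ℝ → ℝ)
    (hφdiff : ∀ t ∈ Ioi (0:ℝ), HasDerivAt φ (φ' t) t)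
    (hφ'cont : ContinuousOn φ' (Ioi 0))
    (hφ'ne : ∀ t ∈ Ioi (0:ℝ), φ' t ≠ 0)
    (hmono : StrictMonoOn φ (Ioi 0) ∨ StrictAntiOn φ (Ioi 0))
    (ρK g : Euc n → ℝ)
    (hρK : ContinuousOn ρK (usphere n)) (hρKpos : ∀ u ∈ usphere n, 0 < ρK u)
    (hg : ContinuousOn g (usphere n))
    (δ : ℝ) (hδ : 0 < δ) (ρe : ℝ → Euc n → ℝ)
    (hρe : ∀ ε ∈ Ioo (-δ) δ, ∀ u ∈ usphere n,
      0 < ρe ε u ∧ φ (ρe ε u) = φ (ρK u) + ε * g u) :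
    TendstoUniformlyOn (fun ε u => (ρe ε u - ρK u) / ε)
      (fun u => g u / φ' (ρK u)) (𝓝[≠] (0:ℝ)) (usphere n) := by
  have hφ'ρK : ContinuousOn (fun u => φ' (ρK u)) (usphere n) :=
    hφ'cont.comp hρK fun u hu => hρKpos u hu
  refine (isCompact_sphere 0 1).tendstoUniformlyOn_of_tendsto_prod
    (hg.div hφ'ρK fun u hu => hφ'ne _ (hρKpos u hu)) fun u₀ hu₀ => ?_
  set l := 𝓝[≠] (0:ℝ) ×ˢ 𝓝[usphere n] u₀
  have hx₀ : Ioi (0:ℝ) ∈ 𝓝 (ρK u₀) := Ioi_mem_nhds (hρKpos u₀ hu₀)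
  have hε : Tendsto (fun q : ℝ × Euc n => q.1) l (𝓝 0) :=
    tendsto_fst.mono_right nhdsWithin_le_nhds
  have hs : Tendsto (fun q : ℝ × Euc n => ρK q.2) l (𝓝 (ρK u₀)) :=
    (hρK u₀ hu₀).tendsto.comp tendsto_snd
  have hc : Tendsto (fun q : ℝ × Euc n => g q.2) l (𝓝 (g u₀)) :=
    (hg u₀ hu₀).tendsto.comp tendsto_snd
  have hρe_ev : ∀ᶠ q in l, 0 < ρe q.1 q.2 ∧ φ (ρe q.1 q.2) = φ (ρK q.2) + q.1 * g q.2 := by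
    filter_upwards [hε.eventually (Ioo_mem_nhds (neg_neg_iff_pos.2 hδ) hδ),
      eventually_mem_nhdsWithin.prod_inr _] with q hq hqu
    exact hρe q.1 hq q.2 hqu
  have hφt : Tendsto (fun q : ℝ × Euc n => φ (ρe q.1 q.2)) l (𝓝 (φ (ρK u₀))) := by
    have := ((hφdiff _ (hρKpos u₀ hu₀)).continuousAt.tendsto.comp hs).add (hε.mul hc)
    rw [zero_mul, add_zero] at this
    exact this.congr' (hρe_ev.mono fun q hq => hq.2.symm)
  have ht : Tendsto (fun q : ℝ × Euc n => ρe q.1 q.2) l (𝓝 (ρK u₀)) := by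
    have hpos := hρe_ev.mono fun q hq => hq.1
    rcases hmono with hmono | hmono
    · exact hmono.tendsto_of_tendsto_comp hx₀ hpos hφt
    · exact hmono.tendsto_of_tendsto_comp hx₀ hpos hφt
  exact (hasStrictDerivAt_of_hasDerivAt_of_continuousAt
    (eventually_of_mem hx₀ hφdiff) (hφ'cont.continuousAt hx₀)).tendsto_sub_div_of_eq_add_mul
    (hφ'ne _ (hρKpos u₀ hu₀)) hs ht hc (eventually_mem_nhdsWithin.prod_inl _)
    (hρe_ev.mono fun q hq => hq.2)

theorem stmt1 (n : ℕ) (a : EReal) (φ φ' : ℝ → ℝ)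
    (hφdiff : ∀ t ∈ Ioi (0:ℝ), HasDerivAt φ (φ' t) t)
    (hφ'cont : ContinuousOn φ' (Ioi 0))
    (hφ'ne : ∀ t ∈ Ioi (0:ℝ), φ' t ≠ 0)
    (hmono : StrictMonoOn φ (Ioi 0) ∨ StrictAntiOn φ (Ioi 0))
    (hinf : ⨅ t : {t : ℝ // 0 < t}, (φ t.1 : EReal) = a)
    (hsup : ⨆ t : {t : ℝ // 0 < t}, (φ t.1 : EReal) = ⊤)
    (ρK g : Euc n → ℝ)
    (hρK : ContinuousOn ρK (usphere n)) (hρKpos : ∀ u ∈ usphere n, 0 < ρK u)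
    (hg : ContinuousOn g (usphere n))
    (δ : ℝ) (hδ : 0 < δ) (ρe : ℝ → Euc n → ℝ)
    (hρe : ∀ ε ∈ Ioo (-δ) δ, ∀ u ∈ usphere n,
      0 < ρe ε u ∧ φ (ρe ε u) = φ (ρK u) + ε * g u)
    (hρe0 : ∀ u ∈ usphere n, ρe 0 u = ρK u) :
    TendstoUniformlyOn (fun ε u => (ρe ε u - ρK u) / ε)
      (fun u => g u / φ' (ρK u)) (𝓝[≠] (0:ℝ)) (usphere n) :=
  stmt1_general n φ φ' hφdiff hφ'cont hφ'ne hmono ρK g hρK hρKpos hg δ hδ ρe hρe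
end
end

section
/- Let G be continuous on (0,∞)×S^{n-1} with values in ℝ, and assume the partial derivative G_t(t,u) = ∂G(t,u)/∂t exists and is continuous on (0,∞)×S^{n-1}. Let φ:(0,∞)→ℝ be continuously differentiable, strictly monotonic, with nowhere-zero derivative, inf φ = a ∈ ℝ∪{-∞}, sup φ = ∞. Let ρ_K ∈ C(S^{n-1}) be strictly positive, g ∈ C(S^{n-1}), and set ρ_ε(u) = φ^{-1}(φ(ρ_K(u)) + ε g(u)). Then lim_{ε→0} (1/ε)(∫_{S^{n-1}} G(ρ_ε(u),u) du − ∫_{S^{n-1}} G(ρ_K(u),u) du) = ∫_{S^{n-1}} g(u) G_t(ρ_K(u),u)/φ'(ρ_K(u)) du. -/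
open MeasureTheory Metric Set Filter
open scoped RealInnerProductSpace NNReal ENNReal Topology

noncomputable section

/-!
Differentiation under the integral sign. Since `φ` is strictly monotone, `ρ_ε = φ⁻¹ (φ ∘ ρ_K + ε g)`
depends continuously on `(ε, u)`, and the inverse function rule gives `∂ρ_ε/∂ε = g / φ'(ρ_ε)`.
So `∂_ε G(ρ_ε(u), u) = G_t(ρ_ε(u), u) g(u) / φ'(ρ_ε(u))` is jointly continuous, hence bounded on
`[-r, r] × S^{n-1}`, and dominated convergence applies because `S^{n-1}` has finite
`(n-1)`-dimensional Hausdorff measure: it is covered by the radial projections of the `2n` faces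
of the cube `[-1, 1]^n`, which are Lipschitz images of an `(n-1)`-dimensional cube.
-/

theorem lipschitzOnWith_inv_norm_smul {E : Type*} [NormedAddCommGroup E] [NormedSpace ℝ E] :
    LipschitzOnWith 2 (fun x : E => ‖x‖⁻¹ • x) {x | 1 ≤ ‖x‖} := by
  refine LipschitzOnWith.of_dist_le_mul fun x hx y hy => ?_
  have hx0 : 0 < ‖x‖ := one_pos.trans_le hx
  have hy0 : 0 < ‖y‖ := one_pos.trans_le hy
  have hfirst : ‖‖x‖⁻¹ • (x - y)‖ ≤ ‖x - y‖ := by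
    rw [norm_smul, norm_inv, norm_norm]
    exact mul_le_of_le_one_left (norm_nonneg _) (inv_le_one_of_one_le₀ hx)
  have hsecond : ‖(‖x‖⁻¹ - ‖y‖⁻¹) • y‖ ≤ ‖x - y‖ := by
    rw [norm_smul, Real.norm_eq_abs, inv_sub_inv hx0.ne' hy0.ne', abs_div,
      abs_of_pos (mul_pos hx0 hy0), div_mul_eq_mul_div, div_le_iff₀ (mul_pos hx0 hy0),
      abs_sub_comm]
    calc |‖x‖ - ‖y‖| * ‖y‖ ≤ ‖x - y‖ * ‖y‖ := by gcongr; exact abs_norm_sub_norm_le x y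
      _ ≤ ‖x - y‖ * (‖x‖ * ‖y‖) := by gcongr; exact le_mul_of_one_le_left hy0.le hx
  calc dist (‖x‖⁻¹ • x) (‖y‖⁻¹ • y) = ‖‖x‖⁻¹ • (x - y) + (‖x‖⁻¹ - ‖y‖⁻¹) • y‖ := by
        rw [dist_eq_norm, smul_sub, sub_smul]; abel_nf
    _ ≤ ‖x - y‖ + ‖x - y‖ := norm_add_le_of_le hfirst hsecond
    _ = (2 : ℝ≥0) * dist x y := by rw [dist_eq_norm]; push_cast; ring

-- Parametrised by `closedBall 0 1`, which is the cube `[-1, 1]^m` for the sup norm of `Fin m → ℝ`.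
def cubeFaceToSphere {m : ℕ} (i : Fin (m + 1)) (σ : ℝ) (y : Fin m → ℝ) : Euc (m + 1) :=
  let z : Euc (m + 1) := WithLp.toLp 2 (Fin.insertNth i σ y)
  ‖z‖⁻¹ • z

theorem exists_lipschitzOnWith_cubeFaceToSphere {m : ℕ} (i : Fin (m + 1)) {σ : ℝ} (hσ : |σ| = 1) :
    ∃ K, LipschitzOnWith K (cubeFaceToSphere i σ) (closedBall 0 1) := by
  have hinsert : Isometry fun y : Fin m → ℝ => (Fin.insertNth i σ y : Fin (m + 1) → ℝ) :=
    .of_dist_eq fun y y' => by simp [Fin.dist_insertNth_insertNth]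
  have hface := (PiLp.lipschitzWith_toLp 2 fun _ : Fin (m + 1) => ℝ).comp hinsert.lipschitz
  refine ⟨_, lipschitzOnWith_inv_norm_smul.comp hface.lipschitzOnWith fun y _ => ?_⟩
  have hcoord := PiLp.norm_apply_le (WithLp.toLp 2 (Fin.insertNth i σ y) : Euc (m + 1)) i
  simp_all

theorem sphere_subset_biUnion_cubeFaceToSphere (m : ℕ) :
    sphere (0 : Euc (m + 1)) 1 ⊆ ⋃ p ∈ (univ : Set (Fin (m + 1))) ×ˢ ({1, -1} : Set ℝ),
      cubeFaceToSphere p.1 p.2 '' closedBall 0 1 := by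
  intro x hx
  rw [mem_sphere_zero_iff_norm] at hx
  obtain ⟨i, -, hi⟩ := Finset.exists_max_image Finset.univ (fun j => |x j|) Finset.univ_nonempty
  have hxi : 0 < |x i| := by
    by_contra! h
    have : x = 0 := by ext j; simpa using (hi j (Finset.mem_univ j)).trans h
    simp [this] at hx
  set y : Fin (m + 1) → ℝ := |x i|⁻¹ • x.ofLp
  have hyi : |y i| = 1 := by simp [y, abs_mul, hxi.ne']
  refine mem_biUnion (x := (i, y i)) ⟨mem_univ i, ?_⟩ ⟨Fin.removeNth i y, ?_, ?_⟩
  · rcases (abs_eq zero_le_one).1 hyi with h | h <;> simp [h]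
  · refine mem_closedBall_zero_iff.2 (pi_norm_le_iff_of_nonneg zero_le_one |>.2 fun k => ?_)
    simpa [Fin.removeNth, y, abs_mul, inv_mul_le_iff₀ hxi] using hi _ (Finset.mem_univ _)
  · have hy : (WithLp.toLp 2 y : Euc (m + 1)) = |x i|⁻¹ • x := rfl
    simp only [cubeFaceToSphere, Fin.insertNth_self_removeNth, hy, norm_smul, hx, norm_inv,
      Real.norm_eq_abs, abs_abs, mul_one, inv_inv, smul_smul, mul_inv_cancel₀ hxi.ne', one_smul]

theorem hausdorffMeasure_sphere_lt_top (n : ℕ) : μH[(n : ℝ) - 1] (sphere (0 : Euc n) 1) < ∞ := by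
  cases n with
  | zero => simp [sphere_eq_empty_of_subsingleton one_ne_zero]
  | succ m =>
    have hdim : ((m + 1 : ℕ) : ℝ) - 1 = (Fintype.card (Fin m) : ℝ) := by simp
    rw [hdim]
    refine (measure_mono (sphere_subset_biUnion_cubeFaceToSphere m)).trans_lt <|
      measure_biUnion_lt_top (finite_univ.prod (toFinite _)) fun p hp => ?_
    have hσ : |p.2| = 1 := by
      rcases (mem_prod.1 hp).2 with h | h <;> simp_all
    obtain ⟨K, hK⟩ := exists_lipschitzOnWith_cubeFaceToSphere p.1 hσ
    refine (hK.hausdorffMeasure_image_le (Nat.cast_nonneg _)).trans_lt ?_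
    rw [hausdorffMeasure_pi_real]
    exact ENNReal.mul_lt_top (by simp) measure_closedBall_lt_top

instance isFiniteMeasure_restrict_usphere (n : ℕ) :
    IsFiniteMeasure ((μH[(n : ℝ) - 1]).restrict (usphere n)) :=
  isFiniteMeasure_restrict.2 (hausdorffMeasure_sphere_lt_top n).ne

theorem ContinuousOn.of_comp_strictMonoOn {X α β : Type*} [TopologicalSpace X]
    [LinearOrder α] [TopologicalSpace α] [OrderTopology α]
    [LinearOrder β] [TopologicalSpace β] [OrderTopology β]
    {φ : α → β} {c : α} (hφ : StrictMonoOn φ (Ioi c)) {f : X → α} {s : Set X}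
    (hf : ∀ x ∈ s, c < f x) (hφf : ContinuousOn (fun x => φ (f x)) s) : ContinuousOn f s := by
  intro x hx
  have hfx : c < f x := hf x hx
  refine tendsto_order.2 ⟨fun b hb => ?_, fun b hb => ?_⟩
  · rcases le_or_gt b c with hbc | hbc
    · filter_upwards [self_mem_nhdsWithin] with y hy using hbc.trans_lt (hf y hy)
    · filter_upwards [hφf x hx (Ioi_mem_nhds (hφ hbc hfx hb)), self_mem_nhdsWithin] with y hy hys
      exact (hφ.lt_iff_lt hbc (hf y hys)).1 hy
  · filter_upwards [hφf x hx (Iio_mem_nhds (hφ hfx (hfx.trans hb) hb)), self_mem_nhdsWithin]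
      with y hy hys
    exact (hφ.lt_iff_lt (hf y hys) (hfx.trans hb)).1 hy

theorem ContinuousOn.of_comp_strictAntiOn {X α β : Type*} [TopologicalSpace X]
    [LinearOrder α] [TopologicalSpace α] [OrderTopology α]
    [LinearOrder β] [TopologicalSpace β] [OrderTopology β]
    {φ : α → β} {c : α} (hφ : StrictAntiOn φ (Ioi c)) {f : X → α} {s : Set X}
    (hf : ∀ x ∈ s, c < f x) (hφf : ContinuousOn (fun x => φ (f x)) s) : ContinuousOn f s :=
  ContinuousOn.of_comp_strictMonoOn (β := βᵒᵈ) hφ.dual_right hf hφf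

theorem ContinuousAt.hasDerivAt_of_comp_eq_add_mul {φ r : ℝ → ℝ} {φ' c k ε₀ : ℝ}
    (hr : ContinuousAt r ε₀) (hφ : HasDerivAt φ φ' (r ε₀)) (hφ' : φ' ≠ 0)
    (h : ∀ᶠ ε in 𝓝 ε₀, φ (r ε) = c + ε * k) :
    HasDerivAt r (k / φ') ε₀ := by
  rcases eq_or_ne k 0 with rfl | hk
  · -- `φ` does not take the value `φ (r ε₀)` near `r ε₀` elsewhere, so `r` is locally constant
    have hφne := hr.eventually (eventually_nhdsWithin_iff.1 (hφ.eventually_ne (c := φ (r ε₀)) hφ'))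
    have hconst : r =ᶠ[𝓝 ε₀] fun _ => r ε₀ := by
      filter_upwards [hφne, h] with ε hne hε
      by_contra hrε
      exact hne hrε (by rw [hε, h.self_of_nhds]; ring)
    rw [zero_div]
    exact (hasDerivAt_const ε₀ (r ε₀)).congr_of_eventuallyEq hconst
  · have hinv : ∀ᶠ ε in 𝓝 ε₀, (φ (r ε) - c) / k = ε := by
      filter_upwards [h] with ε hε
      rw [hε]
      field_simp
      ring
    simpa only [inv_div] using
      HasDerivAt.of_local_left_inverse hr ((hφ.sub_const c).div_const k) (div_ne_zero hφ' hk) hinv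

theorem hasDerivAt_setIntegral_of_continuousOn {α : Type*} [TopologicalSpace α]
    [MeasurableSpace α] [OpensMeasurableSpace α] {μ : Measure α} {K : Set α}
    [IsFiniteMeasure (μ.restrict K)] (hK : IsCompact K) (hKm : MeasurableSet K)
    {F F' : ℝ → α → ℝ} {U : Set ℝ} {x₀ : ℝ} (hU : U ∈ 𝓝 x₀)
    (hF : ContinuousOn (Function.uncurry F) (U ×ˢ K))
    (hF' : ContinuousOn (Function.uncurry F') (U ×ˢ K))
    (hderiv : ∀ x ∈ U, ∀ u ∈ K, HasDerivAt (F · u) (F' x u) x) :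
    HasDerivAt (fun x => ∫ u in K, F x u ∂μ) (∫ u in K, F' x₀ u ∂μ) x₀ := by
  obtain ⟨a, b, hx₀, hab, habU⟩ := exists_Icc_mem_subset_of_mem_nhds hU
  obtain ⟨C, hC⟩ := (isCompact_Icc.prod hK).exists_bound_of_continuousOn
    (hF'.mono (prod_mono habU subset_rfl))
  obtain ⟨C₀, hC₀⟩ := hK.exists_bound_of_continuousOn (hF.uncurry_left x₀ (mem_of_mem_nhds hU))
  refine (hasDerivAt_integral_of_dominated_loc_of_deriv_le hab ?_ ?_ ?_ ?_
    (integrable_const C) ?_).2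
  · filter_upwards [hU] with x hx using (hF.uncurry_left x hx).aestronglyMeasurable hKm
  · exact .of_bound ((hF.uncurry_left x₀ (mem_of_mem_nhds hU)).aestronglyMeasurable hKm) C₀
      (ae_restrict_of_forall_mem hKm hC₀)
  · exact (hF'.uncurry_left x₀ (mem_of_mem_nhds hU)).aestronglyMeasurable hKm
  · exact ae_restrict_of_forall_mem hKm fun u hu x hx => hC (x, u) ⟨hx, hu⟩
  · exact ae_restrict_of_forall_mem hKm fun u hu x hx => hderiv x (habU hx) u hu

section Perturbation

variable {X : Type*} [TopologicalSpace X] {φ φ' : ℝ → ℝ} {ρK g : X → ℝ} {S : Set X}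
  {I : Set ℝ} {ρe : ℝ → X → ℝ}

theorem continuousOn_uncurry_of_forall_comp_eq_add_mul (hφ : ContinuousOn φ (Ioi 0))
    (hmono : StrictMonoOn φ (Ioi 0) ∨ StrictAntiOn φ (Ioi 0)) (hρK : ContinuousOn ρK S)
    (hρKpos : ∀ u ∈ S, 0 < ρK u) (hg : ContinuousOn g S)
    (hρe : ∀ ε ∈ I, ∀ u ∈ S, 0 < ρe ε u ∧ φ (ρe ε u) = φ (ρK u) + ε * g u) :
    ContinuousOn (Function.uncurry ρe) (I ×ˢ S) := by
  have hpos : ∀ p ∈ I ×ˢ S, 0 < ρe p.1 p.2 := fun p hp => (hρe p.1 hp.1 p.2 hp.2).1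
  have hφρe : ContinuousOn (fun p : ℝ × X => φ (ρe p.1 p.2)) (I ×ˢ S) := by
    refine ContinuousOn.congr (f := fun p => φ (ρK p.2) + p.1 * g p.2) ?_
      fun p hp => (hρe p.1 hp.1 p.2 hp.2).2
    exact ((hφ.comp hρK hρKpos).comp continuousOn_snd fun p hp => hp.2).add
      (continuousOn_fst.mul (hg.comp continuousOn_snd fun p hp => hp.2))
  exact hmono.elim (fun h => .of_comp_strictMonoOn h hpos hφρe)
    (fun h => .of_comp_strictAntiOn h hpos hφρe)

theorem hasDerivAt_of_forall_comp_eq_add_mul (hI : IsOpen I)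
    (hρe : ∀ ε ∈ I, ∀ u ∈ S, 0 < ρe ε u ∧ φ (ρe ε u) = φ (ρK u) + ε * g u)
    (hρ : ContinuousOn (Function.uncurry ρe) (I ×ˢ S))
    (hφ : ∀ t ∈ Ioi (0:ℝ), HasDerivAt φ (φ' t) t) (hφ' : ∀ t ∈ Ioi (0:ℝ), φ' t ≠ 0)
    {ε : ℝ} (hε : ε ∈ I) {u : X} (hu : u ∈ S) :
    HasDerivAt (ρe · u) (g u / φ' (ρe ε u)) ε := by
  have hεI : I ∈ 𝓝 ε := hI.mem_nhds hε
  have hpos : 0 < ρe ε u := (hρe ε hε u hu).1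
  exact ((hρ.uncurry_right u hu).continuousAt hεI).hasDerivAt_of_comp_eq_add_mul
    (hφ _ hpos) (hφ' _ hpos) (eventually_of_mem hεI fun ε' hε' => (hρe ε' hε' u hu).2)

end Perturbation

theorem stmt2_general (n : ℕ) (G Gt : ℝ → Euc n → ℝ)
    (hG : ContinuousOn (fun p : ℝ × Euc n => G p.1 p.2) (Ioi 0 ×ˢ usphere n))
    (hGt : ContinuousOn (fun p : ℝ × Euc n => Gt p.1 p.2) (Ioi 0 ×ˢ usphere n))
    (hGtderiv : ∀ t ∈ Ioi (0:ℝ), ∀ u ∈ usphere n,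
      HasDerivAt (fun s => G s u) (Gt t u) t)
    (φ φ' : ℝ → ℝ)
    (hφdiff : ∀ t ∈ Ioi (0:ℝ), HasDerivAt φ (φ' t) t)
    (hφ'cont : ContinuousOn φ' (Ioi 0))
    (hφ'ne : ∀ t ∈ Ioi (0:ℝ), φ' t ≠ 0)
    (hmono : StrictMonoOn φ (Ioi 0) ∨ StrictAntiOn φ (Ioi 0))
    (ρK g : Euc n → ℝ)
    (hρK : ContinuousOn ρK (usphere n)) (hρKpos : ∀ u ∈ usphere n, 0 < ρK u)
    (hg : ContinuousOn g (usphere n))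
    (δ : ℝ) (hδ : 0 < δ) (ρe : ℝ → Euc n → ℝ)
    (hρe : ∀ ε ∈ Ioo (-δ) δ, ∀ u ∈ usphere n,
      0 < ρe ε u ∧ φ (ρe ε u) = φ (ρK u) + ε * g u)
    (hρe0 : ∀ u ∈ usphere n, ρe 0 u = ρK u) :
    Tendsto (fun ε => ((∫ u, G (ρe ε u) u ∂smeas n) - ∫ u, G (ρK u) u ∂smeas n) / ε)
      (𝓝[≠] (0:ℝ))
      (𝓝 (∫ u, g u * Gt (ρK u) u / φ' (ρK u) ∂smeas n)) := by
  have hφ : ContinuousOn φ (Ioi 0) := fun t ht => (hφdiff t ht).continuousAt.continuousWithinAt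
  have hρ := continuousOn_uncurry_of_forall_comp_eq_add_mul hφ hmono hρK hρKpos hg hρe
  have hpos : ∀ p ∈ Ioo (-δ) δ ×ˢ usphere n, 0 < ρe p.1 p.2 := fun p hp => (hρe p.1 hp.1 p.2 hp.2).1
  have hpair : ContinuousOn (fun p : ℝ × Euc n => (ρe p.1 p.2, p.2)) (Ioo (-δ) δ ×ˢ usphere n) :=
    hρ.prodMk continuousOn_snd
  have hmeas : MeasurableSet (usphere n) := isClosed_sphere.measurableSet
  have hderiv := hasDerivAt_setIntegral_of_continuousOn (μ := μH[(n:ℝ) - 1]) (K := usphere n)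
    (isCompact_sphere 0 1) hmeas (Ioo_mem_nhds (neg_neg_of_pos hδ) hδ)
    (F := fun ε u => G (ρe ε u) u) (F' := fun ε u => Gt (ρe ε u) u * (g u / φ' (ρe ε u)))
    (hG.comp hpair fun p hp => ⟨hpos p hp, hp.2⟩)
    ((hGt.comp hpair fun p hp => ⟨hpos p hp, hp.2⟩).mul
      ((hg.comp continuousOn_snd fun p hp => hp.2).div (hφ'cont.comp hρ hpos)
        fun p hp => hφ'ne _ (hpos p hp)))
    fun ε hε u hu => by
      exact (hGtderiv _ (hpos (ε, u) ⟨hε, hu⟩) u hu).comp ε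
        (hasDerivAt_of_forall_comp_eq_add_mul isOpen_Ioo hρe hρ hφdiff hφ'ne hε hu)
  have hF₀ : ∫ u in usphere n, G (ρe 0 u) u ∂μH[(n:ℝ) - 1] = ∫ u, G (ρK u) u ∂smeas n :=
    setIntegral_congr_fun hmeas fun u hu => by rw [hρe0 u hu]
  have hF'₀ : ∫ u in usphere n, Gt (ρe 0 u) u * (g u / φ' (ρe 0 u)) ∂μH[(n:ℝ) - 1] =
      ∫ u, g u * Gt (ρK u) u / φ' (ρK u) ∂smeas n :=
    setIntegral_congr_fun hmeas fun u hu => by rw [hρe0 u hu]; ring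
  rw [hF'₀] at hderiv
  refine (hasDerivAt_iff_tendsto_slope.1 hderiv).congr fun ε => ?_
  rw [slope_def_field, sub_zero, hF₀]
  rfl

theorem stmt2 (n : ℕ) (a : EReal) (G Gt : ℝ → Euc n → ℝ)
    (hG : ContinuousOn (fun p : ℝ × Euc n => G p.1 p.2) (Ioi 0 ×ˢ usphere n))
    (hGt : ContinuousOn (fun p : ℝ × Euc n => Gt p.1 p.2) (Ioi 0 ×ˢ usphere n))
    (hGtderiv : ∀ t ∈ Ioi (0:ℝ), ∀ u ∈ usphere n,
      HasDerivAt (fun s => G s u) (Gt t u) t)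
    (φ φ' : ℝ → ℝ)
    (hφdiff : ∀ t ∈ Ioi (0:ℝ), HasDerivAt φ (φ' t) t)
    (hφ'cont : ContinuousOn φ' (Ioi 0))
    (hφ'ne : ∀ t ∈ Ioi (0:ℝ), φ' t ≠ 0)
    (hmono : StrictMonoOn φ (Ioi 0) ∨ StrictAntiOn φ (Ioi 0))
    (hinf : ⨅ t : {t : ℝ // 0 < t}, (φ t.1 : EReal) = a)
    (hsup : ⨆ t : {t : ℝ // 0 < t}, (φ t.1 : EReal) = ⊤)
    (ρK g : Euc n → ℝ)
    (hρK : ContinuousOn ρK (usphere n)) (hρKpos : ∀ u ∈ usphere n, 0 < ρK u)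
    (hg : ContinuousOn g (usphere n))
    (δ : ℝ) (hδ : 0 < δ) (ρe : ℝ → Euc n → ℝ)
    (hρe : ∀ ε ∈ Ioo (-δ) δ, ∀ u ∈ usphere n,
      0 < ρe ε u ∧ φ (ρe ε u) = φ (ρK u) + ε * g u)
    (hρe0 : ∀ u ∈ usphere n, ρe 0 u = ρK u) :
    Tendsto (fun ε => ((∫ u, G (ρe ε u) u ∂smeas n) - ∫ u, G (ρK u) u ∂smeas n) / ε)
      (𝓝[≠] (0:ℝ))
      (𝓝 (∫ u, g u * Gt (ρK u) u / φ' (ρK u) ∂smeas n)) :=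
  stmt2_general n G Gt hG hGt hGtderiv φ φ' hφdiff hφ'cont hφ'ne hmono ρK g hρK hρKpos hg δ hδ ρe
    hρe hρe0
end
end

section
/- Let n ≥ 2, q ≠ 0, let φ:(0,∞)→(0,∞) be continuous, and suppose φ_q(t) := φ(t^{1/q}) is convex on (0,∞). Let ρ_K, ρ_L, ρ_Q ∈ C(S^{n-1}) be strictly positive. Define Ṽ_q(K,Q) = (1/n)∫_{S^{n-1}} ρ_K(u)^q ρ_Q(u)^{n-q} du and Ṽ_{q,φ}(K,L,Q) = (1/n)∫_{S^{n-1}} φ(ρ_L(u)/ρ_K(u)) ρ_K(u)^q ρ_Q(u)^{n-q} du. Then Ṽ_{q,φ}(K,L,Q) ≥ Ṽ_q(K,Q) · φ((Ṽ_q(L,Q)/Ṽ_q(K,Q))^{1/q}). -/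
open MeasureTheory Metric Set Filter
open scoped RealInnerProductSpace NNReal ENNReal Topology

noncomputable section

def Vq (n : ℕ) (q : ℝ) (ρK ρQ : Euc n → ℝ) : ℝ :=
  (1/(n:ℝ)) * ∫ u, ρK u ^ q * ρQ u ^ ((n:ℝ) - q) ∂smeas n

def Vqφ (n : ℕ) (q : ℝ) (φ : ℝ → ℝ) (ρK ρL ρQ : Euc n → ℝ) : ℝ :=
  (1/(n:ℝ)) * ∫ u, φ (ρL u / ρK u) * ρK u ^ q * ρQ u ^ ((n:ℝ) - q) ∂smeas n


/-! With the weight `w = ρK ^ q * ρQ ^ (n - q)` and `f = (ρL / ρK) ^ q`, one has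
`φ (ρL / ρK) = φ_q f` and the `w`-average of `f` is `m = Ṽ_q(L,Q) / Ṽ_q(K,Q)`. Integrating the
supporting line of the convex `φ_q` at `m` against `w` gives `φ_q m * ∫ w ≤ ∫ φ_q (f) * w`, which is
Jensen's inequality for the probability measure `w du / ∫ w`, proved this way because the domain
`(0, ∞)` of `φ_q` is not closed.

Finiteness of the Hausdorff measure of the sphere comes for free: if `Ṽ_q(K,Q) > 0`, the weight is
integrable and bounded below by a positive constant on the compact sphere, so the sphere has finite
measure; if `Ṽ_q(K,Q) = 0` the right-hand side vanishes. -/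

namespace ConvexOn

variable {s : Set ℝ} {ψ : ℝ → ℝ}

theorem add_rightDeriv_mul_sub_le (hψ : ConvexOn ℝ s ψ) {m t : ℝ} (hm : m ∈ interior s)
    (ht : t ∈ s) : ψ m + derivWithin ψ (Ioi m) m * (t - m) ≤ ψ t := by
  rcases lt_trichotomy t m with htm | rfl | hmt
  · have hslope : slope ψ t m ≤ derivWithin ψ (Ioi m) m :=
      (hψ.slope_le_leftDeriv_of_mem_interior ht hm htm).trans
        (hψ.leftDeriv_le_rightDeriv_of_mem_interior hm)
    rw [slope_def_field, div_le_iff₀ (sub_pos.2 htm)] at hslope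
    linarith
  · simp
  · have hslope : derivWithin ψ (Ioi m) m ≤ slope ψ m t :=
      hψ.rightDeriv_le_slope_of_mem_interior hm ht hmt
    rw [slope_def_field, le_div_iff₀ (sub_pos.2 hmt)] at hslope
    linarith

variable {α : Type*} [MeasurableSpace α] {μ : Measure α} {f w : α → ℝ} {m : ℝ}

theorem map_mul_integral_le_integral_map_mul (hψ : ConvexOn ℝ s ψ) (hm : m ∈ interior s)
    (hfs : ∀ᵐ x ∂μ, f x ∈ s) (hw : 0 ≤ᵐ[μ] w) (hwi : Integrable w μ)
    (hfwi : Integrable (fun x => f x * w x) μ) (hψfwi : Integrable (fun x => ψ (f x) * w x) μ)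
    (hmean : ∫ x, f x * w x ∂μ = m * ∫ x, w x ∂μ) :
    ψ m * ∫ x, w x ∂μ ≤ ∫ x, ψ (f x) * w x ∂μ := by
  set a := derivWithin ψ (Ioi m) m
  calc ψ m * ∫ x, w x ∂μ
      = ∫ x, (ψ m - a * m) * w x + a * (f x * w x) ∂μ := by
        rw [integral_add (hwi.const_mul _) (hfwi.const_mul _), integral_const_mul,
          integral_const_mul, hmean]
        ring
    _ ≤ ∫ x, ψ (f x) * w x ∂μ := by
        refine integral_mono_ae ((hwi.const_mul _).add (hfwi.const_mul _)) hψfwi ?_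
        filter_upwards [hfs, hw] with x hx hwx
        have := mul_le_mul_of_nonneg_right (hψ.add_rightDeriv_mul_sub_le hm hx) hwx
        linarith

end ConvexOn

theorem integral_pos_of_ae_pos {α : Type*} [MeasurableSpace α] {μ : Measure α} [NeZero μ]
    {f : α → ℝ} (hf : ∀ᵐ x ∂μ, 0 < f x) (hfi : Integrable f μ) : 0 < ∫ x, f x ∂μ := by
  rw [integral_pos_iff_support_of_nonneg_ae (hf.mono fun _ hx => hx.le) hfi]
  refine (Measure.measure_univ_pos.2 (NeZero.ne μ)).trans_le (measure_mono_ae ?_)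
  filter_upwards [hf] with x hx _ using hx.ne'

theorem IsCompact.measure_ne_top_of_integrableOn {X : Type*} [TopologicalSpace X]
    [MeasurableSpace X] {ν : Measure X} {K : Set X} {w : X → ℝ} (hK : IsCompact K)
    (hwc : ContinuousOn w K) (hw : ∀ x ∈ K, 0 < w x) (hwi : IntegrableOn w K ν) :
    ν K ≠ ∞ := by
  rcases K.eq_empty_or_nonempty with rfl | hne
  · simp
  obtain ⟨x₀, hx₀, hmin⟩ := hK.exists_isMinOn hne hwc
  rw [← Measure.restrict_apply_self]
  refine (lt_of_le_of_lt (measure_mono fun x hx => ?_) (hwi.measure_ge_lt_top (hw x₀ hx₀))).ne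
  exact hmin hx

theorem dual_orlicz_minkowski_integral {α : Type*} [MeasurableSpace α] {μ : Measure α}
    {q r : ℝ} (hq : q ≠ 0) {φ : ℝ → ℝ} (hconv : ConvexOn ℝ (Ioi 0) (fun t => φ (t ^ (1 / q))))
    {ρK ρL ρQ : α → ℝ} (hK : ∀ᵐ u ∂μ, 0 < ρK u) (hL : ∀ᵐ u ∂μ, 0 < ρL u)
    (hQ : ∀ᵐ u ∂μ, 0 < ρQ u) (hKi : Integrable (fun u => ρK u ^ q * ρQ u ^ r) μ)
    (hLi : Integrable (fun u => ρL u ^ q * ρQ u ^ r) μ)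
    (hφi : Integrable (fun u => φ (ρL u / ρK u) * ρK u ^ q * ρQ u ^ r) μ)
    (hA : 0 < ∫ u, ρK u ^ q * ρQ u ^ r ∂μ) :
    (∫ u, ρK u ^ q * ρQ u ^ r ∂μ) *
        φ (((∫ u, ρL u ^ q * ρQ u ^ r ∂μ) / ∫ u, ρK u ^ q * ρQ u ^ r ∂μ) ^ (1 / q)) ≤
      ∫ u, φ (ρL u / ρK u) * ρK u ^ q * ρQ u ^ r ∂μ := by
  set w := fun u => ρK u ^ q * ρQ u ^ r
  set f := fun u => (ρL u / ρK u) ^ q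
  set ψ := fun t : ℝ => φ (t ^ (1 / q))
  have hfw : (fun u => f u * w u) =ᵐ[μ] fun u => ρL u ^ q * ρQ u ^ r := by
    filter_upwards [hK, hL] with u hKu hLu
    simp only [f, w, Real.div_rpow hLu.le hKu.le]
    field_simp
  have hψfw : (fun u => ψ (f u) * w u) =ᵐ[μ] fun u => φ (ρL u / ρK u) * ρK u ^ q * ρQ u ^ r := by
    filter_upwards [hK, hL] with u hKu hLu
    simp only [ψ, f, w, one_div, Real.rpow_rpow_inv (div_pos hLu hKu).le hq]
    ring
  have hfpos : ∀ᵐ u ∂μ, 0 < f u := by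
    filter_upwards [hK, hL] with u hKu hLu using Real.rpow_pos_of_pos (div_pos hLu hKu) q
  have hwpos : ∀ᵐ u ∂μ, 0 < w u := by
    filter_upwards [hK, hQ] with u hKu hQu
    exact mul_pos (Real.rpow_pos_of_pos hKu q) (Real.rpow_pos_of_pos hQu r)
  have : NeZero μ := ⟨fun h0 => hA.ne' (by simp [h0])⟩
  have hB : 0 < ∫ u, f u * w u ∂μ := integral_pos_of_ae_pos
    (by filter_upwards [hfpos, hwpos] with u hfu hwu using mul_pos hfu hwu)
    (hLi.congr hfw.symm)
  rw [← integral_congr_ae hfw, ← integral_congr_ae hψfw, mul_comm]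
  exact hconv.map_mul_integral_le_integral_map_mul (by rw [interior_Ioi]; exact div_pos hB hA) hfpos
    (hwpos.mono fun u hu => hu.le) hKi (hLi.congr hfw.symm) (hφi.congr hψfw.symm)
    (div_mul_cancel₀ _ hA.ne').symm

theorem stmt5_general (n : ℕ) (q : ℝ) (hq : q ≠ 0) (φ : ℝ → ℝ)
    (hφc : ContinuousOn φ (Ioi 0)) (hφpos : ∀ t > (0:ℝ), 0 < φ t)
    (hconv : ConvexOn ℝ (Ioi 0) (fun t : ℝ => φ (t ^ (1/q))))
    (ρK ρL ρQ : Euc n → ℝ)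
    (hρK : ContinuousOn ρK (usphere n)) (hρKpos : ∀ u ∈ usphere n, 0 < ρK u)
    (hρL : ContinuousOn ρL (usphere n)) (hρLpos : ∀ u ∈ usphere n, 0 < ρL u)
    (hρQ : ContinuousOn ρQ (usphere n)) (hρQpos : ∀ u ∈ usphere n, 0 < ρQ u)
 :
    Vqφ n q φ ρK ρL ρQ ≥ Vq n q ρK ρQ * φ ((Vq n q ρL ρQ / Vq n q ρK ρQ) ^ (1/q)) := by
  have hS : IsCompact (usphere n) := isCompact_sphere 0 1
  have hae : ∀ᵐ u ∂smeas n, u ∈ usphere n := ae_restrict_mem hS.measurableSet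
  have hpow {ρ : Euc n → ℝ} (hρ : ContinuousOn ρ (usphere n))
      (hρpos : ∀ u ∈ usphere n, 0 < ρ u) (p : ℝ) : ContinuousOn (fun u => ρ u ^ p) (usphere n) :=
    hρ.rpow_const fun u hu => Or.inl (hρpos u hu).ne'
  have hwc := (hpow hρK hρKpos q).mul (hpow hρQ hρQpos ((n : ℝ) - q))
  have hwpos (u) (hu : u ∈ usphere n) : 0 < ρK u ^ q * ρQ u ^ ((n : ℝ) - q) :=
    mul_pos (Real.rpow_pos_of_pos (hρKpos u hu) q) (Real.rpow_pos_of_pos (hρQpos u hu) _)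
  rcases (show 0 ≤ Vq n q ρK ρQ from mul_nonneg (by positivity)
    (integral_nonneg_of_ae (hae.mono fun u hu => (hwpos u hu).le))).eq_or_lt with hV | hV
  · rw [← hV, zero_mul, ge_iff_le]
    refine mul_nonneg (by positivity) (integral_nonneg_of_ae ?_)
    filter_upwards [hae] with u hu
    rw [mul_assoc]
    exact mul_nonneg (hφpos _ (div_pos (hρLpos u hu) (hρKpos u hu))).le (hwpos u hu).le
  have hA := pos_of_mul_pos_right hV (by positivity)
  have hSfin := hS.measure_ne_top_of_integrableOn hwc hwpos
    (Integrable.of_integral_ne_zero hA.ne')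
  have hint {h : Euc n → ℝ} (hh : ContinuousOn h (usphere n)) : Integrable h (smeas n) :=
    hh.integrableOn_of_subset_isCompact hS hS.measurableSet subset_rfl hSfin
  have hratio := hρL.div hρK fun u hu => (hρKpos u hu).ne'
  rw [ge_iff_le, Vqφ, Vq, Vq, mul_div_mul_left _ _ (left_ne_zero_of_mul hV.ne'), mul_assoc]
  gcongr
  exact dual_orlicz_minkowski_integral hq hconv (hae.mono hρKpos) (hae.mono hρLpos)
    (hae.mono hρQpos) (hint hwc) (hint ((hpow hρL hρLpos q).mul (hpow hρQ hρQpos _)))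
    (hint (((hφc.comp hratio fun u hu => div_pos (hρLpos u hu) (hρKpos u hu)).mul
      (hpow hρK hρKpos q)).mul (hpow hρQ hρQpos _))) hA

theorem stmt5 (n : ℕ) (hn : 2 ≤ n) (q : ℝ) (hq : q ≠ 0) (φ : ℝ → ℝ)
    (hφc : ContinuousOn φ (Ioi 0)) (hφpos : ∀ t > (0:ℝ), 0 < φ t)
    (hconv : ConvexOn ℝ (Ioi 0) (fun t : ℝ => φ (t ^ (1/q))))
    (ρK ρL ρQ : Euc n → ℝ)
    (hρK : ContinuousOn ρK (usphere n)) (hρKpos : ∀ u ∈ usphere n, 0 < ρK u)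
    (hρL : ContinuousOn ρL (usphere n)) (hρLpos : ∀ u ∈ usphere n, 0 < ρL u)
    (hρQ : ContinuousOn ρQ (usphere n)) (hρQpos : ∀ u ∈ usphere n, 0 < ρQ u)
 :
    Vqφ n q φ ρK ρL ρQ ≥ Vq n q ρK ρQ * φ ((Vq n q ρL ρQ / Vq n q ρK ρQ) ^ (1/q)) :=
  stmt5_general n q hq φ hφc hφpos hconv ρK ρL ρQ hρK hρKpos hρL hρLpos hρQ hρQpos
end
end

section
/- Let n ≥ 2, q ≠ 0, let φ:(0,∞)→(0,∞) be continuous with φ_q(t) := φ(t^{1/q}) concave on (0,∞), and let ρ_K, ρ_L, ρ_Q ∈ C(S^{n-1}) be strictly positive. Then Ṽ_{q,φ}(K,L,Q) ≤ Ṽ_q(K,Q) · φ((Ṽ_q(L,Q)/Ṽ_q(K,Q))^{1/q}), where Ṽ_q(K,Q) = (1/n)∫ ρ_K^q ρ_Q^{n-q} du and Ṽ_{q,φ}(K,L,Q) = (1/n)∫ φ(ρ_L/ρ_K) ρ_K^q ρ_Q^{n-q} du. -/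
open MeasureTheory Metric Set Filter
open scoped RealInnerProductSpace NNReal ENNReal Topology

noncomputable section

/-
Normalise the weight `w = ρ_K^q ρ_Q^{n-q}` to a measure on the sphere. Then `Ṽ_q(K,Q)` is its total
mass, `Ṽ_q(L,Q)` is the integral of `f = (ρ_L/ρ_K)^q`, and `Ṽ_{q,φ}(K,L,Q)` is the integral of
`φ_q ∘ f`, so the inequality is Jensen's inequality for the concave function `φ_q`. All integrals
are finite because the unit sphere has finite `(n-1)`-dimensional Hausdorff measure: it is covered
by the images of two compact balls under the (smooth, hence Lipschitz on compacts) inverse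
stereographic projections from two antipodal poles.
-/

open Module

section SphereMeasure

variable {E : Type*} [NormedAddCommGroup E] [InnerProductSpace ℝ E]

theorem sphere_inter_inner_nonpos_subset_stereoInvFunAux_image {v : E} (hv : ‖v‖ = 1) :
    sphere (0 : E) 1 ∩ {x | ⟪v, x⟫ ≤ 0} ⊆
      (stereoInvFunAux v ∘ (↑)) '' closedBall (0 : (ℝ ∙ v)ᗮ) 2 := by
  rintro x ⟨hx, hvx⟩
  have hxv : x ≠ v := by
    rintro rfl
    rw [mem_ofPred_eq, real_inner_self_eq_norm_sq, hv] at hvx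
    norm_num at hvx
  refine ⟨stereoToFun v x, ?_, congrArg Subtype.val (stereo_left_inv hv (x := ⟨x, hx⟩) hxv)⟩
  rw [mem_closedBall_zero_iff, stereoToFun_apply, norm_smul]
  have hproj : ‖(ℝ ∙ v)ᗮ.orthogonalProjectionOnto x‖ ≤ 1 :=
    ((ℝ ∙ v)ᗮ.norm_orthogonalProjectionOnto_apply_le x).trans (mem_sphere_zero_iff_norm.1 hx).le
  have hvx' : innerSL ℝ v x ≤ 0 := hvx
  have hfac : ‖2 / ((1 : ℝ) - innerSL ℝ v x)‖ ≤ 2 := by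
    rw [Real.norm_eq_abs, abs_of_pos (by apply div_pos <;> linarith)]
    exact div_le_self zero_le_two (by linarith)
  calc _ ≤ 2 * 1 := mul_le_mul hfac hproj (norm_nonneg _) zero_le_two
    _ = 2 := mul_one 2

variable [FiniteDimensional ℝ E] [MeasurableSpace E] [BorelSpace E]

theorem hausdorffMeasure_stereoInvFunAux_image_closedBall_lt_top {v : E} (hv : ‖v‖ = 1) (r : ℝ) :
    μH[finrank ℝ E - 1] ((stereoInvFunAux v ∘ (↑)) '' closedBall (0 : (ℝ ∙ v)ᗮ) r) < ∞ := by
  obtain ⟨K, hK⟩ := ((contDiff_stereoInvFunAux (m := 1)).comp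
    (ℝ ∙ v)ᗮ.subtypeL.contDiff).contDiffOn.exists_lipschitzOnWith one_ne_zero
    (convex_closedBall _ _) (isCompact_closedBall (0 : (ℝ ∙ v)ᗮ) r)
  have hv0 : v ≠ 0 := by simp [← norm_ne_zero_iff, hv]
  have hdim : (finrank ℝ (ℝ ∙ v)ᗮ : ℝ) = finrank ℝ E - 1 := by
    have hpos : 0 < finrank ℝ E := finrank_pos_iff_exists_ne_zero.2 ⟨v, hv0⟩
    have : Fact (finrank ℝ E = (finrank ℝ E - 1) + 1) := ⟨by omega⟩
    rw [Submodule.finrank_orthogonal_span_singleton (n := finrank ℝ E - 1) hv0,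
      Nat.cast_sub hpos, Nat.cast_one]
  have hd : (0 : ℝ) ≤ finrank ℝ E - 1 := by rw [← hdim]; positivity
  refine (hK.hausdorffMeasure_image_le hd).trans_lt (ENNReal.mul_lt_top ?_ ?_)
  · exact ENNReal.rpow_lt_top_of_nonneg hd ENNReal.coe_ne_top
  · rw [← hdim]
    exact (isCompact_closedBall _ _).measure_lt_top

theorem hausdorffMeasure_unit_sphere_lt_top : μH[finrank ℝ E - 1] (sphere (0 : E) 1) < ∞ := by
  rcases (sphere (0 : E) 1).eq_empty_or_nonempty with h | ⟨v, hv⟩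
  · simp [h]
  rw [mem_sphere_zero_iff_norm] at hv
  have hv' : ‖-v‖ = 1 := by rwa [norm_neg]
  have hcover : sphere (0 : E) 1 ⊆ (stereoInvFunAux v ∘ (↑)) '' closedBall (0 : (ℝ ∙ v)ᗮ) 2 ∪
      (stereoInvFunAux (-v) ∘ (↑)) '' closedBall (0 : (ℝ ∙ (-v))ᗮ) 2 := by
    intro x hx
    rcases le_total ⟪v, x⟫ 0 with h | h
    · exact Or.inl (sphere_inter_inner_nonpos_subset_stereoInvFunAux_image hv ⟨hx, h⟩)
    · refine Or.inr (sphere_inter_inner_nonpos_subset_stereoInvFunAux_image hv' ⟨hx, ?_⟩)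
      simpa [inner_neg_left] using h
  refine (measure_mono hcover).trans_lt ((measure_union_le _ _).trans_lt ?_)
  exact ENNReal.add_lt_top.2 ⟨hausdorffMeasure_stereoInvFunAux_image_closedBall_lt_top hv 2,
    hausdorffMeasure_stereoInvFunAux_image_closedBall_lt_top hv' 2⟩

end SphereMeasure

section WeightedJensen

variable {α : Type*} [MeasurableSpace α] {μ : Measure α} {w : α → ℝ}

theorem toReal_ofReal_ae_eq (hw : 0 ≤ᵐ[μ] w) :
    (fun x => (ENNReal.ofReal (w x)).toReal) =ᵐ[μ] w := by
  filter_upwards [hw] with x hx using ENNReal.toReal_ofReal hx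

theorem integral_withDensity_ofReal (hw : 0 ≤ᵐ[μ] w) (hwm : AEMeasurable w μ) (h : α → ℝ) :
    ∫ x, h x ∂μ.withDensity (fun x => ENNReal.ofReal (w x)) = ∫ x, w x * h x ∂μ := by
  rw [integral_withDensity_eq_integral_toReal_smul₀ hwm.ennreal_ofReal
    (ae_of_all _ fun _ => ENNReal.ofReal_lt_top)]
  refine integral_congr_ae ?_
  filter_upwards [toReal_ofReal_ae_eq hw] with x hx
  rw [smul_eq_mul, hx]

theorem integrable_withDensity_ofReal_iff (hw : 0 ≤ᵐ[μ] w) (hwm : AEMeasurable w μ) {h : α → ℝ} :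
    Integrable h (μ.withDensity fun x => ENNReal.ofReal (w x)) ↔
      Integrable (fun x => w x * h x) μ := by
  rw [integrable_withDensity_iff_integrable_smul₀' hwm.ennreal_ofReal
    (ae_of_all _ fun _ => ENNReal.ofReal_lt_top)]
  refine integrable_congr ?_
  filter_upwards [toReal_ofReal_ae_eq hw] with x hx
  rw [smul_eq_mul, hx]

-- When `∫ w = 0` the quotient is the junk value `0`, and both sides vanish.
theorem ConcaveOn.integral_mul_le_integral_mul_map_div {s : Set ℝ} {g : ℝ → ℝ} {f : α → ℝ}
    (hg : ConcaveOn ℝ s g) (hgc : ContinuousOn g s) (hsc : IsClosed s)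
    (hw : 0 ≤ᵐ[μ] w) (hwi : Integrable w μ) (hfs : ∀ᵐ x ∂μ, f x ∈ s)
    (hwf : Integrable (fun x => w x * f x) μ) (hwgf : Integrable (fun x => w x * g (f x)) μ) :
    ∫ x, w x * g (f x) ∂μ ≤ (∫ x, w x ∂μ) * g ((∫ x, w x * f x ∂μ) / ∫ x, w x ∂μ) := by
  rcases (integral_nonneg_of_ae hw).eq_or_lt with hzero | hpos
  · have hw0 : w =ᵐ[μ] 0 := (integral_eq_zero_iff_of_nonneg_ae hw hwi).1 hzero.symm
    rw [← hzero, zero_mul]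
    refine (integral_eq_zero_of_ae ?_).le
    filter_upwards [hw0] with x hx
    simp [hx]
  set ν := μ.withDensity fun x => ENNReal.ofReal (w x)
  have hwm := hwi.aemeasurable
  have hν : ν univ = ENNReal.ofReal (∫ x, w x ∂μ) := by
    rw [withDensity_apply _ MeasurableSet.univ, Measure.restrict_univ,
      ofReal_integral_eq_lintegral_ofReal hwi hw]
  have : IsFiniteMeasure ν := ⟨by rw [hν]; exact ENNReal.ofReal_lt_top⟩
  have : NeZero ν :=
    ⟨Measure.measure_univ_ne_zero.1 (by rw [hν]; exact (ENNReal.ofReal_pos.2 hpos).ne')⟩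
  have hjensen := hg.le_map_average hgc hsc
    (withDensity_absolutelyContinuous μ _ |>.ae_le hfs)
    ((integrable_withDensity_ofReal_iff hw hwm).2 hwf)
    ((integrable_withDensity_ofReal_iff hw hwm).2 hwgf)
  rw [average_eq, average_eq, integral_withDensity_ofReal hw hwm,
    integral_withDensity_ofReal hw hwm, measureReal_def, hν, ENNReal.toReal_ofReal hpos.le,
    smul_eq_mul, smul_eq_mul, inv_mul_le_iff₀ hpos, inv_mul_eq_div] at hjensen
  exact hjensen

end WeightedJensen


theorem integral_comp_div_mul_rpow_mul_le {X : Type*} [TopologicalSpace X] [MeasurableSpace X]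
    [OpensMeasurableSpace X] {μ : Measure X} {S : Set X} (hS : IsCompact S) (hSm : MeasurableSet S)
    (hμS : μ S ≠ ∞) {q : ℝ} (hq : q ≠ 0) {φ : ℝ → ℝ} (hφc : ContinuousOn φ (Ioi 0))
    (hconc : ConcaveOn ℝ (Ioi 0) fun t => φ (t ^ (1 / q))) {k l c : X → ℝ}
    (hk : ContinuousOn k S) (hkpos : ∀ x ∈ S, 0 < k x) (hl : ContinuousOn l S)
    (hlpos : ∀ x ∈ S, 0 < l x) (hc : ContinuousOn c S) (hcpos : ∀ x ∈ S, 0 < c x) :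
    ∫ x in S, φ (l x / k x) * k x ^ q * c x ∂μ ≤
      (∫ x in S, k x ^ q * c x ∂μ) *
        φ (((∫ x in S, l x ^ q * c x ∂μ) / ∫ x in S, k x ^ q * c x ∂μ) ^ (1 / q)) := by
  have hS' : ∀ᵐ x ∂μ.restrict S, x ∈ S := ae_restrict_mem hSm
  have hint {h : X → ℝ} (hh : ContinuousOn h S) : Integrable h (μ.restrict S) :=
    hh.integrableOn_of_subset_isCompact hS hSm subset_rfl hμS
  set w : X → ℝ := fun x => k x ^ q * c x
  set f : X → ℝ := fun x => (l x / k x) ^ q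
  set g : ℝ → ℝ := fun t => φ (t ^ (1 / q))
  have hwc : ContinuousOn w S := (hk.rpow_const fun x hx => .inl (hkpos x hx).ne').mul hc
  have hfc : ContinuousOn f S := (hl.div hk fun x hx => (hkpos x hx).ne').rpow_const
    fun x hx => .inl (div_pos (hlpos x hx) (hkpos x hx)).ne'
  obtain ⟨a, ha, hfa⟩ := hS.exists_forall_le' hfc
    fun x hx => Real.rpow_pos_of_pos (div_pos (hlpos x hx) (hkpos x hx)) q
  have hgc : ContinuousOn g (Ici a) := hφc.comp
    (continuousOn_id.rpow_const fun t ht => .inl (ha.trans_le ht).ne')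
    fun t ht => Real.rpow_pos_of_pos (ha.trans_le ht) _
  have hw : ∀ x ∈ S, 0 ≤ w x := fun x hx =>
    mul_nonneg (Real.rpow_nonneg (hkpos x hx).le q) (hcpos x hx).le
  have hwf : ∀ x ∈ S, w x * f x = l x ^ q * c x := fun x hx => by
    have := (Real.rpow_pos_of_pos (hkpos x hx) q).ne'
    simp only [w, f, Real.div_rpow (hlpos x hx).le (hkpos x hx).le]
    field_simp
  have hwgf : ∀ x ∈ S, w x * g (f x) = φ (l x / k x) * k x ^ q * c x := fun x hx => by
    simp only [w, f, g, one_div, Real.rpow_rpow_inv (div_pos (hlpos x hx) (hkpos x hx)).le hq]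
    ring
  have hjensen := (hconc.subset (Ici_subset_Ioi.2 ha) (convex_Ici a)
    ).integral_mul_le_integral_mul_map_div hgc isClosed_Ici (hS'.mono hw) (hint hwc)
    (hS'.mono hfa) (hint (hwc.mul hfc)) (hint (hwc.mul (hgc.comp hfc hfa)))
  rwa [integral_congr_ae (hS'.mono hwf), integral_congr_ae (hS'.mono hwgf)] at hjensen

theorem hausdorffMeasure_usphere_lt_top (n : ℕ) : μH[(n : ℝ) - 1] (usphere n) < ∞ := by
  simpa [usphere] using hausdorffMeasure_unit_sphere_lt_top (E := Euc n)

theorem stmt6_general (n : ℕ) (hn : 2 ≤ n) (q : ℝ) (hq : q ≠ 0) (φ : ℝ → ℝ)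
    (hφc : ContinuousOn φ (Ioi 0))
    (hconc : ConcaveOn ℝ (Ioi 0) (fun t : ℝ => φ (t ^ (1/q))))
    (ρK ρL ρQ : Euc n → ℝ)
    (hρK : ContinuousOn ρK (usphere n)) (hρKpos : ∀ u ∈ usphere n, 0 < ρK u)
    (hρL : ContinuousOn ρL (usphere n)) (hρLpos : ∀ u ∈ usphere n, 0 < ρL u)
    (hρQ : ContinuousOn ρQ (usphere n)) (hρQpos : ∀ u ∈ usphere n, 0 < ρQ u)
 :
    Vqφ n q φ ρK ρL ρQ ≤ Vq n q ρK ρQ * φ ((Vq n q ρL ρQ / Vq n q ρK ρQ) ^ (1/q)) := by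
  have hρQc : ContinuousOn (fun u => ρQ u ^ ((n : ℝ) - q)) (usphere n) :=
    hρQ.rpow_const fun u hu => .inl (hρQpos u hu).ne'
  have key := integral_comp_div_mul_rpow_mul_le (μ := μH[(n : ℝ) - 1]) (isCompact_sphere 0 1)
    isClosed_sphere.measurableSet (hausdorffMeasure_usphere_lt_top n).ne hq hφc hconc
    hρK hρKpos hρL hρLpos hρQc fun u hu => Real.rpow_pos_of_pos (hρQpos u hu) _
  have hn' : (1 / n : ℝ) ≠ 0 := one_div_ne_zero (Nat.cast_ne_zero.2 (by omega))
  rw [Vqφ, Vq, Vq, mul_div_mul_left _ _ hn', mul_assoc]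
  exact mul_le_mul_of_nonneg_left key (by positivity)

theorem stmt6 (n : ℕ) (hn : 2 ≤ n) (q : ℝ) (hq : q ≠ 0) (φ : ℝ → ℝ)
    (hφc : ContinuousOn φ (Ioi 0)) (hφpos : ∀ t > (0:ℝ), 0 < φ t)
    (hconc : ConcaveOn ℝ (Ioi 0) (fun t : ℝ => φ (t ^ (1/q))))
    (ρK ρL ρQ : Euc n → ℝ)
    (hρK : ContinuousOn ρK (usphere n)) (hρKpos : ∀ u ∈ usphere n, 0 < ρK u)
    (hρL : ContinuousOn ρL (usphere n)) (hρLpos : ∀ u ∈ usphere n, 0 < ρL u)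
    (hρQ : ContinuousOn ρQ (usphere n)) (hρQpos : ∀ u ∈ usphere n, 0 < ρQ u)
 :
    Vqφ n q φ ρK ρL ρQ ≤ Vq n q ρK ρQ * φ ((Vq n q ρL ρQ / Vq n q ρK ρQ) ^ (1/q)) :=
  stmt6_general n hn q hq φ hφc hconc ρK ρL ρQ hρK hρKpos hρL hρLpos hρQ hρQpos
end
end
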